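/- Let P and P' be machine processes of the NFB translation. If P ==tau==> P' and WkObs(P) = WkObs(P'), then P and P' are barbed equivalent w.r.t. H. -/

import Mathlib

/-! ### HOcore: syntax, LTS, barbs, barbed bisimilarity -/

/-- Channel names of HOcore. -/
abbrev Name := ℕ

/-- HOcore processes, with de Bruijn indices for process variables. -/
inductive Proc : Type
  | nil : Proc
  | pvar : ℕ → Proc
  | par : Proc → Proc → Proc
  | inp : Name → Proc → Proc
  | out : Name → Proc → Proc
  deriving DecidableEq

namespace Proc

/-- Shift the free de Bruijn indices `≥ k` by `d`. -/
def lift (d : ℕ) : ℕ → Proc → Proc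
  | _, nil => nil
  | k, pvar n => if n < k then pvar n else pvar (n + d)
  | k, par P Q => par (lift d k P) (lift d k Q)
  | k, inp a P => inp a (lift d (k + 1) P)
  | k, out a P => out a (lift d k P)

/-- Capture-avoiding substitution of `S` for the de Bruijn index `k` in `P`. -/
def subst : Proc → ℕ → Proc → Proc
  | nil, _, _ => nil
  | pvar n, k, S => if n = k then lift k 0 S else if k < n then pvar (n - 1) else pvar n
  | par P Q, k, S => par (subst P k S) (subst Q k S)
  | inp a P, k, S => inp a (subst P (k + 1) S)
  | out a P, k, S => out a (subst P k S)

/-- Free channel names of a process. -/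
def fnames : Proc → Finset Name
  | nil => ∅
  | pvar _ => ∅
  | par P Q => fnames P ∪ fnames Q
  | inp a P => insert a (fnames P)
  | out a P => insert a (fnames P)

end Proc

/-- Labels of the HOcore LTS: internal step, output, input. -/
inductive Label
  | tau : Label
  | outl : Name → Proc → Label
  | inl : Name → Proc → Label

/-- Structural congruence: parallel composition is associative, commutative,
and has `nil` as a neutral element. -/
inductive SCong : Proc → Proc → Prop
  | refl (P) : SCong P P
  | symm {P Q} : SCong P Q → SCong Q P
  | trans {P Q R} : SCong P Q → SCong Q R → SCong P R
  | parComm (P Q) : SCong (.par P Q) (.par Q P)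
  | parAssoc (P Q R) : SCong (.par (.par P Q) R) (.par P (.par Q R))
  | parNil (P) : SCong (.par P .nil) P
  | parCong {P P' Q Q'} : SCong P P' → SCong Q Q' → SCong (.par P Q) (.par P' Q')
  | inpCong {P P'} (a) : SCong P P' → SCong (.inp a P) (.inp a P')
  | outCong {P P'} (a) : SCong P P' → SCong (.out a P) (.out a P')

/-- The labeled transition system of HOcore (processes are considered up to
structural congruence). -/
inductive Step : Proc → Label → Proc → Prop
  | outS (a P) : Step (.out a P) (.outl a P) .nil
  | inpS (a Q P) : Step (.inp a Q) (.inl a P) (Q.subst 0 P)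
  | parL {P l P'} (Q) : Step P l P' → Step (.par P Q) l (.par P' Q)
  | parR {Q l Q'} (P) : Step Q l Q' → Step (.par P Q) l (.par P Q')
  | comm1 {P Q P' Q' a R} : Step P (.outl a R) P' → Step Q (.inl a R) Q' →
      Step (.par P Q) .tau (.par P' Q')
  | comm2 {P Q P' Q' a R} : Step P (.inl a R) P' → Step Q (.outl a R) Q' →
      Step (.par P Q) .tau (.par P' Q')
  | struct {P P' l Q Q'} : SCong P P' → Step P' l Q' → SCong Q' Q → Step P l Q

/-- One internal step. -/
def TauStep (P Q : Proc) : Prop := Step P Label.tau Q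

/-- Weak internal transition `==tau==>`. -/
def WTau : Proc → Proc → Prop := Relation.ReflTransGen TauStep

/-- Observables: input on a name, or output on a name (a coname). -/
inductive Barb
  | inb : Name → Barb
  | outb : Name → Barb
  deriving DecidableEq

/-- Strong observable action w.r.t. a set `H` of hidden names. -/
def StrongBarb (H : Set Name) (P : Proc) : Barb → Prop
  | .inb a => a ∉ H ∧ ∃ Q R, Step P (Label.inl a Q) R
  | .outb a => a ∉ H ∧ ∃ Q R, Step P (Label.outl a Q) R

/-- Weak observable action w.r.t. a set `H` of hidden names. -/
def WeakBarb (H : Set Name) (P : Proc) (α : Barb) : Prop :=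
  ∃ P', WTau P P' ∧ StrongBarb H P' α

/-- Barbed bisimulation w.r.t. the hidden names `H`. -/
def IsBarbedBisim (H : Set Name) (R : Proc → Proc → Prop) : Prop :=
  Symmetric R ∧ ∀ P Q, R P Q →
    (∀ α, StrongBarb H P α → WeakBarb H Q α) ∧
    (∀ S : Proc, ((S.fnames : Set Name) ∩ H = ∅) → R (.par P S) (.par Q S)) ∧
    (∀ P', Step P Label.tau P' → ∃ Q', WTau Q Q' ∧ R P' Q')

/-- Barbed equivalence w.r.t. the hidden names `H`. -/
def BarbedEquiv (H : Set Name) (P Q : Proc) : Prop :=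
  ∃ R, IsBarbedBisim H R ∧ R P Q
/-! ### Open call-by-name lambda-terms (free variables are natural numbers)
and the KAM -/

/-- Lambda-terms: free variables `fvar f` (natural numbers) and bound variables
in de Bruijn representation. -/
inductive Term
  | fvar : ℕ → Term
  | bvar : ℕ → Term
  | lam : Term → Term
  | app : Term → Term → Term
  deriving DecidableEq

namespace Term

/-- Shift the de Bruijn indices `≥ k` by `d`. -/
def liftT (d : ℕ) : ℕ → Term → Term
  | _, fvar f => fvar f
  | k, bvar n => if n < k then bvar n else bvar (n + d)
  | k, lam t => lam (liftT d (k + 1) t)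
  | k, app t s => app (liftT d k t) (liftT d k s)

/-- Capture-avoiding substitution of `s` for the de Bruijn index `k`. -/
def substT : Term → ℕ → Term → Term
  | fvar f, _, _ => fvar f
  | bvar n, k, s => if n = k then liftT k 0 s else if k < n then bvar (n - 1) else bvar n
  | lam t, k, s => lam (substT t (k + 1) s)
  | app t u, k, s => app (substT t k s) (substT u k s)

/-- Free variables of a term. -/
def fv : Term → Finset ℕ
  | fvar f => {f}
  | bvar _ => ∅
  | lam t => fv t
  | app t s => fv t ∪ fv s

end Term

/-- Stacks of the KAM. -/
inductive Stack
  | nil : Stack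
  | cons : Term → Stack → Stack

/-- Configurations of the KAM. -/
structure KConf where
  t : Term
  π : Stack

/-- Transitions of the KAM. -/
inductive KStep : KConf → KConf → Prop
  | push {t s π} : KStep ⟨.app t s, π⟩ ⟨t, .cons s π⟩
  | grab {t s π} : KStep ⟨.lam t, .cons s π⟩ ⟨t.substT 0 s, π⟩

/-- Reflexive-transitive closure of KAM transitions. -/
def KSteps : KConf → KConf → Prop := Relation.ReflTransGen KStep
/-! ### The NFB machine -/

/-- Flags of the NFB machine: `lam`, `done`, `enter`, `skip` and free variables
(natural numbers). -/
inductive NFlag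
  | flam | fdone | fenter | fskip
  | fvarF : ℕ → NFlag
  deriving DecidableEq

/-- Labels of the NFB machine: `tau` or a flag. -/
inductive MLabel
  | tau : MLabel
  | flag : NFlag → MLabel

/-- Configurations of the NFB machine: evaluation mode `<t | π | n>_ev` and
continuation mode `<π | n>_cont`. -/
inductive NConf
  | ev : Term → Stack → ℕ → NConf
  | cont : Stack → ℕ → NConf

/-- Labeled transitions of the NFB machine. -/
inductive NStep : NConf → MLabel → NConf → Prop
  | push {t s π n} : NStep (.ev (.app t s) π n) .tau (.ev t (.cons s π) n)
  | grab {t s π n} : NStep (.ev (.lam t) (.cons s π) n) .tau (.ev (t.substT 0 s) π n)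
  | lambda {t n} : NStep (.ev (.lam t) .nil n) (.flag .flam)
      (.ev (t.substT 0 (.fvar n)) .nil (n + 1))
  | var {f π n} : NStep (.ev (.fvar f) π n) (.flag (.fvarF f)) (.cont π n)
  | enter {t π n} : NStep (.cont (.cons t π) n) (.flag .fenter) (.ev t .nil n)
  | skip {t π n} : NStep (.cont (.cons t π) n) (.flag .fskip) (.cont π n)

/-- Terminating flagged transitions of the NFB machine (no target configuration). -/
inductive NFinal : NConf → NFlag → Prop
  | done {n} : NFinal (.cont .nil n) .fdone

/-- Silent transitions of the NFB machine. -/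
def NTau (C C' : NConf) : Prop := NStep C .tau C'

/-- Flagged transitions of the NFB machine. -/
def NFlagStep (C : NConf) (F : NFlag) (C' : NConf) : Prop := NStep C (.flag F) C'
/-! ### Translation of the NFB machine into HOcore -/

def hdN : Name := 0
def cN : Name := 1
def bN : Name := 2
def kN : Name := 3
def sucN : Name := 4
def zN : Name := 5
def initN : Name := 6
def recN : Name := 7
def chN : Name := 8
def lamN : Name := 9
def enterN : Name := 10
def skipN : Name := 11
def doneN : Name := 12

/-- Translation of the empty stack: `[[ [] ]] = b(x).x`. -/
def trMt : Proc := .inp bN (.pvar 0)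

/-- Translation `<<f>>` of a free variable (also used for the counter):
`<<0>> = z(_).init!<0>` and `<<f+1>> = suc(_).<<f>>`. -/
def trFV : ℕ → Proc
  | 0 => .inp zN (.out initN .nil)
  | f + 1 => .inp sucN (trFV f)

/-- `Restart = lam(_).k(x).(hd!<x> || k!<suc(_).x> || c!<[[ [] ]]> || b!<0>)`. -/
def Restart : Proc :=
  .inp lamN (.inp kN (.par (.out hdN (.pvar 0))
    (.par (.out kN (.inp sucN (.pvar 1)))
      (.par (.out cN trMt) (.out bN .nil)))))

/-- Internal choice `P + Q = ch!<P> || ch!<Q> || ch(x).ch(_).x`. -/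
def choicePlus (P Q : Proc) : Proc :=
  .par (.out chN P) (.par (.out chN Q) (.inp chN (.inp chN (.pvar 1))))

/-- `Choice(P) = enter(_).c(_).(P || c!<[[ [] ]]>) + skip(_).init!<0>`. -/
def Choice (P : Proc) : Proc :=
  choicePlus (.inp enterN (.inp cN (.par (P.lift 2 0) (.out cN trMt))))
    (.inp skipN (.out initN .nil))

/-- `Cont = c(p).(p || b!<done(_).0> || hd(x).b(_).Choice(x))`. -/
def ContP : Proc :=
  .inp cN (.par (.pvar 0)
    (.par (.out bN (.inp doneN .nil))
      (.inp hdN (.inp bN (Choice (.pvar 1))))))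

/-- `Rec = init(_).rec(x).(x || rec!<x> || Cont)`. -/
def RecP : Proc :=
  .inp initN (.inp recN (.par (.pvar 0) (.par (.out recN (.pvar 0)) ContP)))

/-- Translation of NFB terms into HOcore. -/
def trTN : Term → Proc
  | .fvar f => trFV f
  | .bvar n => .pvar n
  | .app t s =>
      .inp cN (.par ((trTN t).lift 1 0)
        (.out cN (.par (.out hdN ((trTN s).lift 1 0)) (.out cN (.pvar 0)))))
  | .lam t =>
      .inp cN (.par (.pvar 0)
        (.par (.out bN Restart)
          (.inp hdN (.inp bN (((trTN t).lift 1 0).lift 1 2)))))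

/-- Translation of stacks. -/
def trStkN : Stack → Proc
  | .nil => trMt
  | .cons t π => .par (.out hdN (trTN t)) (.out cN (trStkN π))

/-- Translation of NFB machine configurations. -/
def trNConf : NConf → Proc
  | .ev t π n =>
      .par (trTN t) (.par (.out cN (trStkN π))
        (.par (.out kN (trFV n)) (.par RecP (.out recN RecP))))
  | .cont π n =>
      .par (.out cN (trStkN π)) (.par (.out kN (trFV n))
        (.par ContP (.par RecP (.out recN RecP))))

/-- A machine process is a weak tau-derivative of a translated configuration. -/
def MachineProc (P : Proc) : Prop := ∃ C : NConf, WTau (trNConf C) P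

/-- The flag names. -/
def FlagNames : Set Name := {lamN, enterN, skipN, doneN, sucN, zN}

/-- The hidden names: names of the translation that are not flag names. -/
def HSet : Set Name := {hdN, cN, bN, kN, initN, recN, chN}

/-- Weak observable actions of a process w.r.t. `HSet`. -/
def WkObs (P : Proc) : Set Barb := {α | WeakBarb HSet P α}

/-- The choice process reachable from `[[<t::π | n>_cont]]`. -/
def ChoiceConfig (t : Term) (π : Stack) (n : ℕ) : Proc :=
  .par (Choice (trTN t)) (.par (.out cN (trStkN π))
    (.par (.out kN (trFV n)) (.par RecP (.out recN RecP))))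

/-- Choice processes (up to structural congruence). -/
def IsChoiceProc (P : Proc) : Prop :=
  ∃ t π n, SCong P (ChoiceConfig t π n) ∧ WTau (trNConf (.cont (.cons t π) n)) P

/-- An input transition on the name `a`. -/
def inpStep (a : Name) (P Q : Proc) : Prop := ∃ R, Step P (Label.inl a R) Q

/-- `n` successive input transitions on `suc`. -/
def sucSeq : ℕ → Proc → Proc → Prop
  | 0, P, Q => P = Q
  | f + 1, P, Q => ∃ P', inpStep sucN P P' ∧ sucSeq f P' Q

/-- Process-level transition corresponding to a machine flag: a transition on
the corresponding flag name; for a free variable `f`, `f` transitions on `suc`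
followed by one on `z`. -/
def FlagStepP : NFlag → Proc → Proc → Prop
  | .flam => inpStep lamN
  | .fenter => inpStep enterN
  | .fskip => inpStep skipN
  | .fdone => inpStep doneN
  | .fvarF f => fun P Q => ∃ P', sucSeq f P P' ∧ inpStep zN P' Q

/-- Process-level transition for a machine label (`tau` or a flag). -/
def MLStepP : MLabel → Proc → Proc → Prop
  | .tau => fun P Q => Step P Label.tau Q
  | .flag F => FlagStepP F

/-- Weak process-level machine-labeled transition. -/
def WMLStepP (l : MLabel) (P Q : Proc) : Prop :=
  ∃ P1 P2, WTau P P1 ∧ MLStepP l P1 P2 ∧ WTau P2 Q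

/-!
Up to structural congruence, a machine process is one of finitely many shapes: a translated
configuration or one of the intermediate states of the translation of a machine step. Their
internal steps are deterministic, except at the internal choice of `Choice`, whose two branches
are told apart by the weak barbs `enter` and `skip`. Their outputs are on hidden names, and a
state with a visible input has no internal step, so a context avoiding the hidden names can only
communicate with a stable state. Hence, if `P ⇒ P'` with the same weak barbs, an internal step of
`P ‖ S` is either the first step of `P` towards `P'` or a step that `P' ‖ S` can copy, and the
pairs `(P ‖ S, P' ‖ S)` form a barbed bisimulation. Structural congruence is handled through
multisets of parallel threads.
-/

/-! ### Structural congruence on thread multisets -/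

namespace Proc

def threadList : Proc → List Proc
  | nil => []
  | par P Q => threadList P ++ threadList Q
  | P => [P]

def threads (P : Proc) : Multiset Proc := P.threadList

@[simp] lemma threads_nil : nil.threads = 0 := rfl
@[simp] lemma threads_pvar (n : ℕ) : (pvar n).threads = {pvar n} := rfl
@[simp] lemma threads_inp (a : Name) (P : Proc) : (inp a P).threads = {inp a P} := rfl
@[simp] lemma threads_out (a : Name) (P : Proc) : (out a P).threads = {out a P} := rfl
@[simp] lemma threads_par (P Q : Proc) : (par P Q).threads = P.threads + Q.threads := by
  simp [threads, threadList]

lemma threads_of_mem_threads {P x : Proc} (hx : x ∈ P.threads) : x.threads = {x} := by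
  induction P with
  | par P Q ihP ihQ =>
    rw [threads_par, Multiset.mem_add] at hx
    exact hx.elim ihP ihQ
  | _ => simp_all

def ofThreads : List Proc → Proc
  | [] => nil
  | x :: l => par x (ofThreads l)

lemma threads_ofThreads (l : List Proc) (h : ∀ x ∈ l, x.threads = {x}) :
    (ofThreads l).threads = l := by
  induction l with
  | nil => rfl
  | cons x l ih => simp_all [ofThreads]

end Proc

open Proc

inductive ThreadCong : Proc → Proc → Prop
  | refl (x : Proc) : ThreadCong x x
  | inp {P Q : Proc} (a : Name) : SCong P Q → ThreadCong (.inp a P) (.inp a Q)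
  | out {P Q : Proc} (a : Name) : SCong P Q → ThreadCong (.out a P) (.out a Q)

namespace ThreadCong

lemma symm {x y : Proc} (h : ThreadCong x y) : ThreadCong y x := by
  cases h with
  | refl => exact refl _
  | inp a h => exact inp a h.symm
  | out a h => exact out a h.symm

lemma trans {x y z : Proc} (h₁ : ThreadCong x y) (h₂ : ThreadCong y z) : ThreadCong x z := by
  cases h₁ with
  | refl => exact h₂
  | inp a h => cases h₂ with
    | refl => exact inp a h
    | inp _ h' => exact inp a (h.trans h')
  | out a h => cases h₂ with
    | refl => exact out a h
    | out _ h' => exact out a (h.trans h')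

instance : IsTrans Proc ThreadCong := ⟨fun _ _ _ => trans⟩

lemma scong {x y : Proc} (h : ThreadCong x y) : SCong x y := by
  cases h with
  | refl => exact SCong.refl _
  | inp a h => exact SCong.inpCong a h
  | out a h => exact SCong.outCong a h

lemma exists_of_out {u : Proc} {a : Name} {R : Proc} (h : ThreadCong u (.out a R)) :
    ∃ R₀, u = .out a R₀ ∧ SCong R₀ R := by
  cases h with
  | refl => exact ⟨R, rfl, SCong.refl R⟩
  | out _ h => exact ⟨_, rfl, h⟩

lemma exists_of_inp {u : Proc} {a : Name} {B : Proc} (h : ThreadCong u (.inp a B)) :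
    ∃ B₀, u = .inp a B₀ ∧ SCong B₀ B := by
  cases h with
  | refl => exact ⟨B, rfl, SCong.refl B⟩
  | inp _ h => exact ⟨_, rfl, h⟩

end ThreadCong

namespace Multiset

lemma rel_threadCong_refl (m : Multiset Proc) : m.Rel ThreadCong m :=
  Multiset.rel_refl_of_refl_on fun x _ => ThreadCong.refl x

lemma Rel.threadCong_symm {m m' : Multiset Proc} (h : m.Rel ThreadCong m') :
    m'.Rel ThreadCong m :=
  (Multiset.rel_flip.2 h).mono fun _ _ _ _ hab => ThreadCong.symm hab

end Multiset

namespace SCong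

lemma par_nil_left (P : Proc) : SCong (.par .nil P) P :=
  (parComm _ _).trans (parNil P)

lemma threads_rel {P Q : Proc} (h : SCong P Q) : P.threads.Rel ThreadCong Q.threads := by
  induction h with
  | symm _ ih => exact ih.threadCong_symm
  | trans _ _ ih₁ ih₂ => exact ih₁.trans ThreadCong ih₂
  | parComm P Q => simpa [add_comm] using Multiset.rel_threadCong_refl _
  | parAssoc P Q R => simpa [add_assoc] using Multiset.rel_threadCong_refl _
  | parCong _ _ ih₁ ih₂ => simpa using ih₁.add ih₂
  | inpCong a h => simpa using Multiset.Rel.cons (ThreadCong.inp a h) Multiset.Rel.zero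
  | outCong a h => simpa using Multiset.Rel.cons (ThreadCong.out a h) Multiset.Rel.zero
  | _ => simpa using Multiset.rel_threadCong_refl _

lemma ofThreads_append (l₁ l₂ : List Proc) :
    SCong (ofThreads (l₁ ++ l₂)) (.par (ofThreads l₁) (ofThreads l₂)) := by
  induction l₁ with
  | nil => exact (par_nil_left _).symm
  | cons x l ih => exact (parCong (refl x) ih).trans (parAssoc _ _ _).symm

lemma self_ofThreads (P : Proc) : SCong P (ofThreads P.threadList) := by
  induction P with
  | nil => exact refl _
  | par P Q ihP ihQ => exact (parCong ihP ihQ).trans (ofThreads_append _ _).symm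
  | _ => exact (parNil _).symm

lemma ofThreads_perm {l₁ l₂ : List Proc} (h : l₁.Perm l₂) :
    SCong (ofThreads l₁) (ofThreads l₂) := by
  induction h with
  | nil => exact refl _
  | cons x _ ih => exact parCong (refl x) ih
  | swap x y l =>
      exact ((parAssoc y x _).symm.trans (parCong (parComm y x) (refl _))).trans
        (parAssoc x y _)
  | trans _ _ ih₁ ih₂ => exact ih₁.trans ih₂

lemma ofThreads_of_coe_eq_cons {l : List Proc} {z : Proc} {k : Multiset Proc}
    (hl : (l : Multiset Proc) = z ::ₘ k) :
    SCong (ofThreads l) (.par z (ofThreads (l.erase z))) ∧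
      ((l.erase z : List Proc) : Multiset Proc) = k := by
  have hz : z ∈ l := by simp [← Multiset.mem_coe, hl]
  refine ⟨ofThreads_perm (List.perm_cons_erase hz), ?_⟩
  rw [← Multiset.coe_erase, hl, Multiset.erase_cons_head]

lemma ofThreads_of_rel {m m' : Multiset Proc} (h : m.Rel ThreadCong m') :
    ∀ l l' : List Proc, (l : Multiset Proc) = m → (l' : Multiset Proc) = m' →
      SCong (ofThreads l) (ofThreads l') := by
  induction h with
  | zero =>
      intro l l' hl hl'
      obtain rfl : l = [] := (Multiset.coe_eq_zero _).1 hl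
      obtain rfl : l' = [] := (Multiset.coe_eq_zero _).1 hl'
      exact refl _
  | cons hxy _ ih =>
      intro l l' hl hl'
      obtain ⟨hsc, he⟩ := ofThreads_of_coe_eq_cons hl
      obtain ⟨hsc', he'⟩ := ofThreads_of_coe_eq_cons hl'
      exact hsc.trans ((parCong hxy.scong (ih _ _ he he')).trans hsc'.symm)

lemma of_threads_rel {P Q : Proc} (h : P.threads.Rel ThreadCong Q.threads) : SCong P Q :=
  ((self_ofThreads P).trans (ofThreads_of_rel h _ _ rfl rfl)).trans (self_ofThreads Q).symm

lemma of_threads_eq {P Q : Proc} (h : P.threads = Q.threads) : SCong P Q :=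
  of_threads_rel (h ▸ Multiset.rel_threadCong_refl _)

end SCong

namespace SCong

lemma lift {P Q : Proc} (h : SCong P Q) (d k : ℕ) : SCong (P.lift d k) (Q.lift d k) := by
  induction h generalizing k with
  | refl => exact refl _
  | symm _ ih => exact (ih k).symm
  | trans _ _ ih₁ ih₂ => exact (ih₁ k).trans (ih₂ k)
  | parComm => exact parComm _ _
  | parAssoc => exact parAssoc _ _ _
  | parNil => exact parNil _
  | parCong _ _ ih₁ ih₂ => exact parCong (ih₁ k) (ih₂ k)
  | inpCong a _ ih => exact inpCong a (ih (k + 1))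
  | outCong a _ ih => exact outCong a (ih k)

lemma subst {P Q : Proc} (h : SCong P Q) (k : ℕ) (S : Proc) :
    SCong (P.subst k S) (Q.subst k S) := by
  induction h generalizing k with
  | refl => exact refl _
  | symm _ ih => exact (ih k).symm
  | trans _ _ ih₁ ih₂ => exact (ih₁ k).trans (ih₂ k)
  | parComm => exact parComm _ _
  | parAssoc => exact parAssoc _ _ _
  | parNil => exact parNil _
  | parCong _ _ ih₁ ih₂ => exact parCong (ih₁ k) (ih₂ k)
  | inpCong a _ ih => exact inpCong a (ih (k + 1))
  | outCong a _ ih => exact outCong a (ih k)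

lemma subst_right (P : Proc) {S S' : Proc} (h : SCong S S') (k : ℕ) :
    SCong (P.subst k S) (P.subst k S') := by
  induction P generalizing k with
  | nil => exact refl _
  | pvar n =>
      simp only [Proc.subst]
      split_ifs
      exacts [h.lift k 0, refl _, refl _]
  | par P Q ihP ihQ => exact parCong (ihP k) (ihQ k)
  | inp a P ih => exact inpCong a (ih (k + 1))
  | out a P ih => exact outCong a (ih k)

end SCong

/-! ### Transitions read on threads -/

lemma Step.of_scong {P P' Q : Proc} {l : Label} (h : SCong P P') (hs : Step P' l Q) :
    Step P l Q :=
  .struct h hs (SCong.refl _)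

def ThreadStep : Multiset Proc → Label → Multiset Proc → Prop
  | M, .tau, N => ∃ a R B m, M = .out a R ::ₘ .inp a B ::ₘ m ∧
      N.Rel ThreadCong ((B.subst 0 R).threads + m)
  | M, .outl a R, N => ∃ R' m, M = .out a R' ::ₘ m ∧ SCong R' R ∧ N.Rel ThreadCong m
  | M, .inl a R, N => ∃ B m, M = .inp a B ::ₘ m ∧
      N.Rel ThreadCong ((B.subst 0 R).threads + m)

namespace ThreadStep

lemma add_right {M N : Multiset Proc} {l : Label} (h : ThreadStep M l N) (K : Multiset Proc) :
    ThreadStep (M + K) l (N + K) := by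
  cases l with
  | tau =>
      obtain ⟨a, R, B, m, rfl, hN⟩ := h
      exact ⟨a, R, B, m + K, by simp, by simpa [add_assoc] using hN.add K.rel_threadCong_refl⟩
  | outl a R =>
      obtain ⟨R', m, rfl, hR, hN⟩ := h
      exact ⟨R', m + K, by simp, hR, hN.add K.rel_threadCong_refl⟩
  | inl a R =>
      obtain ⟨B, m, rfl, hN⟩ := h
      exact ⟨B, m + K, by simp, by simpa [add_assoc] using hN.add K.rel_threadCong_refl⟩

lemma comm {M M' N N' : Multiset Proc} {a : Name} {R : Proc}
    (h : ThreadStep M (.outl a R) N) (h' : ThreadStep M' (.inl a R) N') :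
    ThreadStep (M + M') .tau (N + N') := by
  obtain ⟨R', m, rfl, hR, hN⟩ := h
  obtain ⟨B, m', rfl, hN'⟩ := h'
  refine ⟨a, R', B, m + m', by simp [Multiset.cons_swap], ?_⟩
  have hB := ((SCong.subst_right B hR.symm 0).threads_rel).add (m + m').rel_threadCong_refl
  refine ((hN.add hN').trans ThreadCong ?_).trans ThreadCong hB
  rw [add_left_comm]
  exact Multiset.rel_threadCong_refl _

lemma scong {M M' N N' : Multiset Proc} {l : Label} (hM : M.Rel ThreadCong M')
    (h : ThreadStep M' l N') (hN : N'.Rel ThreadCong N) : ThreadStep M l N := by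
  cases l with
  | tau =>
      obtain ⟨a, R, B, m, rfl, h'⟩ := h
      obtain ⟨u, m₁, hu, hM₁, rfl⟩ := Multiset.rel_cons_right.1 hM
      obtain ⟨v, m₂, hv, hM₂, rfl⟩ := Multiset.rel_cons_right.1 hM₁
      obtain ⟨R₀, rfl, hR⟩ := hu.exists_of_out
      obtain ⟨B₀, rfl, hB⟩ := hv.exists_of_inp
      refine ⟨a, R₀, B₀, m₂, rfl,
        (hN.threadCong_symm.trans ThreadCong h').trans ThreadCong ?_⟩
      exact (((hB.symm.subst 0 R).trans (SCong.subst_right B₀ hR.symm 0)).threads_rel).add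
        hM₂.threadCong_symm
  | outl a R =>
      obtain ⟨R', m, rfl, hR', h'⟩ := h
      obtain ⟨u, m₁, hu, hM₁, rfl⟩ := Multiset.rel_cons_right.1 hM
      obtain ⟨R₀, rfl, hR⟩ := hu.exists_of_out
      exact ⟨R₀, m₁, rfl, hR.trans hR',
        (hN.threadCong_symm.trans ThreadCong h').trans ThreadCong hM₁.threadCong_symm⟩
  | inl a R =>
      obtain ⟨B, m, rfl, h'⟩ := h
      obtain ⟨v, m₁, hv, hM₁, rfl⟩ := Multiset.rel_cons_right.1 hM
      obtain ⟨B₀, rfl, hB⟩ := hv.exists_of_inp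
      refine ⟨B₀, m₁, rfl, (hN.threadCong_symm.trans ThreadCong h').trans ThreadCong ?_⟩
      exact ((hB.symm.subst 0 R).threads_rel).add hM₁.threadCong_symm

end ThreadStep

lemma Step.threadStep {P Q : Proc} {l : Label} (h : Step P l Q) :
    ThreadStep P.threads l Q.threads := by
  induction h with
  | outS a P => exact ⟨P, 0, rfl, SCong.refl P, Multiset.Rel.zero⟩
  | inpS a Q P => exact ⟨Q, 0, rfl, by simpa using Multiset.rel_threadCong_refl _⟩
  | parL Q _ ih => simpa using ih.add_right Q.threads
  | parR P _ ih => simpa [add_comm P.threads] using ih.add_right P.threads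
  | comm1 _ _ ih₁ ih₂ => simpa using ih₁.comm ih₂
  | comm2 _ _ ih₁ ih₂ => simpa [add_comm] using ih₂.comm ih₁
  | struct hP _ hQ ih => exact ih.scong hP.threads_rel hQ.threads_rel

lemma Multiset.add_eq_cons_cases {α : Type*} {u v m : Multiset α} {x : α}
    (h : u + v = x ::ₘ m) :
    (∃ u', u = x ::ₘ u' ∧ m = u' + v) ∨ (∃ v', v = x ::ₘ v' ∧ m = u + v') := by
  rcases Multiset.mem_add.1 (h ▸ Multiset.mem_cons_self x m) with hx | hx
  · obtain ⟨u', rfl⟩ := Multiset.exists_cons_of_mem hx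
    exact .inl ⟨u', rfl, (Multiset.cons_inj_right x).1 (by simpa using h.symm)⟩
  · obtain ⟨v', rfl⟩ := Multiset.exists_cons_of_mem hx
    exact .inr ⟨v', rfl, (Multiset.cons_inj_right x).1 (by simpa using h.symm)⟩

lemma Proc.exists_threads_eq {P : Proc} {m : Multiset Proc} (hm : m ≤ P.threads) :
    ∃ G : Proc, G.threads = m := by
  induction m using Quotient.inductionOn with
  | _ l =>
    exact ⟨ofThreads l, threads_ofThreads l fun x hx =>
      threads_of_mem_threads (Multiset.mem_of_le hm (Multiset.mem_coe.2 hx))⟩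

lemma Step.tau_of_threads {P : Proc} {a : Name} {R B : Proc} {m : Multiset Proc}
    (h : P.threads = .out a R ::ₘ .inp a B ::ₘ m) :
    ∃ Q, Step P .tau Q ∧ Q.threads = (B.subst 0 R).threads + m := by
  obtain ⟨G, hG⟩ :=
    exists_threads_eq (h ▸ (m.le_cons_self _).trans (Multiset.le_cons_self _ _))
  have hP : SCong P (.par (.out a R) (.par (.inp a B) G)) :=
    .of_threads_eq (by simp [h, hG, Multiset.cons_swap])
  exact ⟨_, .of_scong hP (.comm1 (.outS a R) (.parL G (.inpS a B R))), by simp [hG]⟩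

lemma Step.out_of_mem_threads {P : Proc} {a : Name} {R : Proc} (h : .out a R ∈ P.threads) :
    ∃ Q, Step P (.outl a R) Q := by
  obtain ⟨m, hm⟩ := Multiset.exists_cons_of_mem h
  obtain ⟨G, hG⟩ := exists_threads_eq (hm ▸ Multiset.le_cons_self m _)
  have hP : SCong P (.par (.out a R) G) := .of_threads_eq (by simp [hm, hG])
  exact ⟨_, .of_scong hP (.parL G (.outS a R))⟩

lemma Step.inp_of_mem_threads {P : Proc} {a : Name} {B : Proc} (h : .inp a B ∈ P.threads)
    (V : Proc) : ∃ Q, Step P (.inl a V) Q := by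
  obtain ⟨m, hm⟩ := Multiset.exists_cons_of_mem h
  obtain ⟨G, hG⟩ := exists_threads_eq (hm ▸ Multiset.le_cons_self m _)
  have hP : SCong P (.par (.inp a B) G) := .of_threads_eq (by simp [hm, hG])
  exact ⟨_, .of_scong hP (.parL G (.inpS a B V))⟩

lemma Step.mem_threads_of_out {P Q : Proc} {a : Name} {V : Proc} (h : Step P (.outl a V) Q) :
    ∃ R, .out a R ∈ P.threads := by
  obtain ⟨R, m, hP, -⟩ := h.threadStep
  exact ⟨R, hP ▸ Multiset.mem_cons_self _ _⟩

lemma Step.mem_threads_of_inp {P Q : Proc} {a : Name} {V : Proc} (h : Step P (.inl a V) Q) :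
    ∃ B, .inp a B ∈ P.threads := by
  obtain ⟨B, m, hP, -⟩ := h.threadStep
  exact ⟨B, hP ▸ Multiset.mem_cons_self _ _⟩

lemma Step.exists_redex {Z W : Proc} (h : Step Z .tau W) :
    ∃ a R B, .out a R ∈ Z.threads ∧ .inp a B ∈ Z.threads ∧
      ∀ m T, Z.threads = .out a R ::ₘ .inp a B ::ₘ m →
        T.threads = (B.subst 0 R).threads + m → SCong W T := by
  obtain ⟨a, R, B, m', hZ', hW⟩ := h.threadStep
  refine ⟨a, R, B, by simp [hZ'], by simp [hZ'], fun m T hZ hT => .of_threads_rel ?_⟩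
  obtain rfl : m' = m := by simpa using hZ'.symm.trans hZ
  exact hT ▸ hW

lemma Step.scong_of_unique_redex {Z W T : Proc} {a : Name} {R B : Proc} {m : Multiset Proc}
    (h : Step Z .tau W) (hZ : Z.threads = .out a R ::ₘ .inp a B ::ₘ m)
    (huniq : ∀ a' R' B', .out a' R' ∈ Z.threads → .inp a' B' ∈ Z.threads →
      a' = a ∧ R' = R ∧ B' = B)
    (hT : T.threads = (B.subst 0 R).threads + m) : SCong W T := by
  obtain ⟨a', R', B', hR', hB', hW⟩ := h.exists_redex
  obtain ⟨rfl, rfl, rfl⟩ := huniq a' R' B' hR' hB'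
  exact hW m T hZ hT

lemma Step.not_tau_of_no_redex {Z W : Proc}
    (hno : ∀ a R B, .out a R ∈ Z.threads → .inp a B ∈ Z.threads → False) :
    ¬ Step Z .tau W := fun h =>
  let ⟨a, R, B, hR, hB, _⟩ := h.exists_redex; hno a R B hR hB

lemma Step.exists_tau_scong {P T : Proc} {a : Name} {R B : Proc} {m : Multiset Proc}
    (hP : P.threads = .out a R ::ₘ .inp a B ::ₘ m)
    (hT : T.threads = (B.subst 0 R).threads + m) : ∃ Q, Step P .tau Q ∧ SCong Q T :=
  let ⟨Q, hQ, hQT⟩ := Step.tau_of_threads hP; ⟨Q, hQ, .of_threads_eq (hQT.trans hT.symm)⟩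

namespace Proc

lemma fnames_lift (P : Proc) (d k : ℕ) : (P.lift d k).fnames = P.fnames := by
  induction P generalizing k with
  | pvar n => simp only [lift]; split_ifs <;> rfl
  | _ => simp_all [lift, fnames]

lemma fnames_subst_subset (P : Proc) (k : ℕ) (S : Proc) :
    (P.subst k S).fnames ⊆ P.fnames ∪ S.fnames := by
  induction P generalizing k with
  | nil => simp [subst, fnames]
  | pvar n =>
      simp only [subst]
      split_ifs <;> simp [fnames, fnames_lift]
  | par P Q ihP ihQ =>
      simp only [subst, fnames, Finset.union_subset_iff]
      exact ⟨(ihP k).trans (by grind), (ihQ k).trans (by grind)⟩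
  | inp a P ih | out a P ih =>
      simp only [subst, fnames]
      exact Finset.insert_subset_insert a (ih _) |>.trans (by grind)

lemma fnames_eq_sup_threads (P : Proc) : P.fnames = (P.threads.map fnames).sup := by
  induction P with
  | par P Q ihP ihQ => simp [fnames, ihP, ihQ]
  | _ => simp [fnames]

lemma fnames_subset_of_mem_threads {P x : Proc} (hx : x ∈ P.threads) : x.fnames ⊆ P.fnames :=
  P.fnames_eq_sup_threads ▸ Multiset.le_sup (Multiset.mem_map_of_mem fnames hx)

end Proc

lemma SCong.fnames_eq {P Q : Proc} (h : SCong P Q) : P.fnames = Q.fnames := by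
  induction h with
  | refl => rfl
  | symm _ ih => exact ih.symm
  | trans _ _ ih₁ ih₂ => exact ih₁.trans ih₂
  | parComm => simp [fnames, Finset.union_comm]
  | parAssoc => simp [fnames, Finset.union_assoc]
  | _ => simp_all [fnames]

lemma Multiset.Rel.map_fnames_eq {M N : Multiset Proc} (h : M.Rel ThreadCong N) :
    M.map fnames = N.map fnames :=
  Multiset.rel_eq.1 (Multiset.rel_map.2 (h.mono fun _ _ _ _ hxy => hxy.scong.fnames_eq))

lemma Step.fnames_subset_of_tau {P Q : Proc} (h : Step P .tau Q) : Q.fnames ⊆ P.fnames := by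
  obtain ⟨a, R, B, m, hP, hQ⟩ := h.threadStep
  have hB := B.fnames_subst_subset 0 R
  rw [fnames_eq_sup_threads Q, hQ.map_fnames_eq, fnames_eq_sup_threads P, hP]
  simp only [Multiset.map_add, Multiset.sup_add, Multiset.map_cons, Multiset.sup_cons,
    ← fnames_eq_sup_threads, fnames, Finset.sup_eq_union]
  grind

/-! ### Weak transitions and barbs -/

lemma WTau.par_left {X Y : Proc} (S : Proc) (h : WTau X Y) : WTau (.par X S) (.par Y S) :=
  Relation.ReflTransGen.lift (fun Z => Proc.par Z S) (fun _ _ h => Step.parL S h) _ _ h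

lemma WTau.of_scong_of_tau {P P' Q Q' : Proc} (hP : SCong P P') (hw : WTau P' Q)
    (hs : Step Q .tau Q') : WTau P Q' := by
  rcases Relation.ReflTransGen.cases_head hw with rfl | ⟨Z, h₁, h₂⟩
  · exact .single (Step.of_scong hP hs)
  · exact .head (Step.of_scong hP h₁) (h₂.tail hs)

lemma WTau.scong_cases_of_tau_det {Z Z' P : Proc} (h : WTau Z P)
    (hZ : ∀ W, Step Z .tau W → SCong W Z') (hZ' : ∀ W, ¬ Step Z' .tau W) :
    SCong P Z ∨ SCong P Z' := by
  induction h with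
  | refl => exact .inl (.refl Z)
  | tail _ hs ih =>
      rcases ih with h | h
      · exact .inr (hZ _ (.of_scong h.symm hs))
      · exact absurd (.of_scong h.symm hs) (hZ' _)

section Barbs

variable {H : Set Name}

lemma StrongBarb.of_scong {P Q : Proc} {α : Barb} (h : SCong P Q) (hb : StrongBarb H Q α) :
    StrongBarb H P α := by
  cases α with
  | inb a | outb a =>
      obtain ⟨ha, V, R, hs⟩ := hb
      exact ⟨ha, V, R, .of_scong h hs⟩

lemma StrongBarb.par_left {X : Proc} (S : Proc) {α : Barb} (hb : StrongBarb H X α) :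
    StrongBarb H (.par X S) α := by
  cases α with
  | inb a | outb a =>
      obtain ⟨ha, V, R, hs⟩ := hb
      exact ⟨ha, V, _, .parL S hs⟩

lemma StrongBarb.par_right (X : Proc) {S : Proc} {α : Barb} (hb : StrongBarb H S α) :
    StrongBarb H (.par X S) α := by
  cases α with
  | inb a | outb a =>
      obtain ⟨ha, V, R, hs⟩ := hb
      exact ⟨ha, V, _, .parR X hs⟩

lemma StrongBarb.par_cases {X S : Proc} {α : Barb} (hb : StrongBarb H (.par X S) α) :
    StrongBarb H X α ∨ StrongBarb H S α := by
  cases α with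
  | inb a =>
      obtain ⟨ha, V, R, hs⟩ := hb
      obtain ⟨B, hB⟩ := hs.mem_threads_of_inp
      rcases Multiset.mem_add.1 (by simpa using hB) with hB | hB
      · exact .inl ⟨ha, V, Step.inp_of_mem_threads hB V⟩
      · exact .inr ⟨ha, V, Step.inp_of_mem_threads hB V⟩
  | outb a =>
      obtain ⟨ha, V, R, hs⟩ := hb
      obtain ⟨R', hR⟩ := hs.mem_threads_of_out
      rcases Multiset.mem_add.1 (by simpa using hR) with hR | hR
      · exact .inl ⟨ha, R', Step.out_of_mem_threads hR⟩
      · exact .inr ⟨ha, R', Step.out_of_mem_threads hR⟩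

lemma StrongBarb.inb_of_mem_threads {P B : Proc} {a : Name}
    (h : .inp a B ∈ P.threads) (ha : a ∉ H) : StrongBarb H P (.inb a) :=
  ⟨ha, .nil, Step.inp_of_mem_threads h .nil⟩

lemma WeakBarb.of_strongBarb {P : Proc} {α : Barb} (hb : StrongBarb H P α) : WeakBarb H P α :=
  ⟨P, .refl, hb⟩

lemma WeakBarb.of_wtau {P Q : Proc} {α : Barb} (h : WTau P Q) (hb : WeakBarb H Q α) :
    WeakBarb H P α :=
  let ⟨Q', hw, hb'⟩ := hb; ⟨Q', h.trans hw, hb'⟩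

lemma WeakBarb.of_scong {P Q : Proc} {α : Barb} (h : SCong P Q) (hb : WeakBarb H Q α) :
    WeakBarb H P α := by
  obtain ⟨Q', hw, hb'⟩ := hb
  rcases Relation.ReflTransGen.cases_head hw with rfl | ⟨Z, h₁, h₂⟩
  · exact .of_strongBarb (hb'.of_scong h)
  · exact ⟨Q', .head (Step.of_scong h h₁) h₂, hb'⟩

lemma WeakBarb.par_left {X : Proc} (S : Proc) {α : Barb} (hb : WeakBarb H X α) :
    WeakBarb H (.par X S) α :=
  let ⟨_, hw, hb'⟩ := hb; ⟨_, hw.par_left S, hb'.par_left S⟩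

lemma weakBarb_eq_of_scong {P Q : Proc} (h : SCong P Q) : WeakBarb H P = WeakBarb H Q :=
  funext fun _ => propext ⟨.of_scong h.symm, .of_scong h⟩

lemma weakBarb_eq_of_wtau_of_wtau {X X₁ Y : Proc} (h₁ : WTau X X₁) (h₂ : WTau X₁ Y)
    (h : WeakBarb H X = WeakBarb H Y) : WeakBarb H X₁ = WeakBarb H X :=
  funext fun α => propext ⟨.of_wtau h₁, fun hb => (congrFun h α ▸ hb).of_wtau h₂⟩

end Barbs

lemma Step.par_tau_cases {X S W : Proc} (h : Step (.par X S) .tau W) :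
    (∃ X', Step X .tau X' ∧ SCong W (.par X' S)) ∨
    (∃ S', Step S .tau S' ∧ SCong W (.par X S')) ∨
    (∃ a R X', Step X (.outl a R) X' ∧ a ∈ S.fnames) ∨
    (∃ a V X', Step X (.inl a V) X' ∧ a ∈ S.fnames) := by
  obtain ⟨a, R, B, m, hXS, hW⟩ := h.threadStep
  rw [threads_par] at hXS
  have hfn : ∀ {x}, x ∈ S.threads → x.fnames ⊆ S.fnames := fnames_subset_of_mem_threads
  rcases Multiset.add_eq_cons_cases hXS with ⟨u, hu, hm⟩ | ⟨v, hv, hm⟩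
  · rcases Multiset.add_eq_cons_cases hm.symm with ⟨u', hu', rfl⟩ | ⟨v', hv', -⟩
    · obtain ⟨X', hX', hX'th⟩ := Step.tau_of_threads (hu.trans (congrArg _ hu'))
      refine .inl ⟨X', hX', .of_threads_rel ?_⟩
      simpa [hX'th, add_assoc] using hW
    · obtain ⟨X', hX'⟩ := Step.out_of_mem_threads (hu ▸ Multiset.mem_cons_self _ _)
      exact .inr (.inr (.inl ⟨a, R, X', hX', hfn (hv' ▸ Multiset.mem_cons_self _ _) (by
        simp [fnames])⟩))
  · rcases Multiset.add_eq_cons_cases hm.symm with ⟨u', hu', -⟩ | ⟨v', hv', rfl⟩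
    · obtain ⟨X', hX'⟩ := Step.inp_of_mem_threads (hu' ▸ Multiset.mem_cons_self _ _) R
      exact .inr (.inr (.inr ⟨a, R, X', hX', hfn (hv ▸ Multiset.mem_cons_self _ _) (by
        simp [fnames])⟩))
    · obtain ⟨S', hS', hS'th⟩ := Step.tau_of_threads (hv.trans (congrArg _ hv'))
      refine .inr (.inl ⟨S', hS', .of_threads_rel ?_⟩)
      simpa [hS'th, add_left_comm] using hW

/-! ### A sufficient condition for barbed equivalence -/

structure ObsDeterministic (H : Set Name) (M : Proc → Prop) : Prop where
  tau_closed {X X' : Proc} : M X → Step X .tau X' → M X'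
  scong_of_tau_of_tau {X X₁ X₂ : Proc} : M X → Step X .tau X₁ → Step X .tau X₂ →
    WeakBarb H X₁ = WeakBarb H X → SCong X₁ X₂
  not_tau_of_inp {X X' W : Proc} {a : Name} {V : Proc} : M X → Step X (.inl a V) X' →
    a ∉ H → ¬ Step X .tau W
  mem_of_out {X X' : Proc} {a : Name} {V : Proc} : M X → Step X (.outl a V) X' → a ∈ H

namespace ObsDeterministic

def Lag (H : Set Name) (M : Proc → Prop) (A B : Proc) : Prop :=
  ∃ X Y S, (∀ a ∈ S.fnames, a ∉ H) ∧ SCong A (.par X S) ∧ SCong B (.par Y S) ∧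
    M X ∧ WTau X Y ∧ WeakBarb H X = WeakBarb H Y

def BisimRel (H : Set Name) (M : Proc → Prop) (A B : Proc) : Prop :=
  SCong A B ∨ Lag H M A B ∨ Lag H M B A

variable {H : Set Name} {M : Proc → Prop}

lemma BisimRel.tau_of_scong {A B A' : Proc} (h : SCong A B) (hs : Step A .tau A') :
    ∃ B', WTau B B' ∧ BisimRel H M A' B' :=
  ⟨A', .single (.of_scong h.symm hs), .inl (.refl A')⟩

namespace Lag

lemma weakBarb_left {A B : Proc} (h : Lag H M A B) {α : Barb} (hb : StrongBarb H A α) :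
    WeakBarb H B α := by
  obtain ⟨X, Y, S, -, hA, hB, -, -, hobs⟩ := h
  rcases (hb.of_scong hA.symm).par_cases with hX | hS
  · exact .of_scong hB ((hobs ▸ WeakBarb.of_strongBarb hX : WeakBarb H Y α).par_left S)
  · exact .of_strongBarb ((hS.par_right Y).of_scong hB)

lemma weakBarb_right {A B : Proc} (h : Lag H M A B) {α : Barb} (hb : StrongBarb H B α) :
    WeakBarb H A α := by
  obtain ⟨X, Y, S, -, hA, hB, -, -, hobs⟩ := h
  rcases (hb.of_scong hB.symm).par_cases with hY | hS
  · exact .of_scong hA ((hobs ▸ WeakBarb.of_strongBarb hY : WeakBarb H X α).par_left S)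
  · exact .of_strongBarb ((hS.par_right X).of_scong hA)

lemma par {A B : Proc} (h : Lag H M A B) {S' : Proc} (hS' : ∀ a ∈ S'.fnames, a ∉ H) :
    Lag H M (.par A S') (.par B S') := by
  obtain ⟨X, Y, S, hS, hA, hB, hrest⟩ := h
  refine ⟨X, Y, .par S S', ?_, ?_, ?_, hrest⟩
  · simpa [fnames, or_imp, forall_and] using And.intro hS hS'
  · exact (SCong.parCong hA (.refl S')).trans (.parAssoc X S S')
  · exact (SCong.parCong hB (.refl S')).trans (.parAssoc Y S S')

/-- By determinism a step of `X` is the first step towards `Y`, matched by `B` standing still;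
a step of the context is copied by `B`; and `X` can only communicate with the context when it is
stable, that is, when `X = Y`. -/
lemma tau_left (hM : ObsDeterministic H M) {A B A' : Proc} (h : Lag H M A B)
    (hs : Step A .tau A') : ∃ B', WTau B B' ∧ BisimRel H M A' B' := by
  obtain ⟨X, Y, S, hS, hA, hB, hX, hXY, hobs⟩ := h
  have hAB : X = Y → SCong A B := fun heq => hA.trans (heq ▸ hB.symm)
  rcases (Step.of_scong hA.symm hs).par_tau_cases with
    ⟨X', hX', hA'⟩ | ⟨S', hS', hA'⟩ | ⟨a, R, X', hX', haS⟩ | ⟨a, V, X', hX', haS⟩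
  · rcases Relation.ReflTransGen.cases_head hXY with hXeqY | ⟨X₁, hX₁, hX₁Y⟩
    · exact BisimRel.tau_of_scong (hAB hXeqY) hs
    have hobs₁ := weakBarb_eq_of_wtau_of_wtau (.single hX₁) hX₁Y hobs
    refine ⟨B, .refl, .inr (.inl ⟨X₁, Y, S, hS, ?_, hB, hM.tau_closed hX hX₁, hX₁Y,
      hobs₁.trans hobs⟩)⟩
    exact hA'.trans (.parCong (hM.scong_of_tau_of_tau hX hX₁ hX' hobs₁).symm (.refl S))
  · have hS'H : ∀ a ∈ S'.fnames, a ∉ H := fun a ha => hS a (hS'.fnames_subset_of_tau ha)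
    exact ⟨.par Y S', .single (.of_scong hB (.parR Y hS')),
      .inr (.inl ⟨X, Y, S', hS'H, hA', .refl _, hX, hXY, hobs⟩)⟩
  · exact absurd (hM.mem_of_out hX hX') (hS a haS)
  · rcases Relation.ReflTransGen.cases_head hXY with hXeqY | ⟨X₁, hX₁, -⟩
    · exact BisimRel.tau_of_scong (hAB hXeqY) hs
    · exact absurd hX₁ (hM.not_tau_of_inp hX hX' (hS a haS))

lemma tau_right {A B B' : Proc} (h : Lag H M A B) (hs : Step B .tau B') :
    ∃ A', WTau A A' ∧ BisimRel H M B' A' := by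
  obtain ⟨X, Y, S, -, hA, hB, -, hXY, -⟩ := h
  exact ⟨B', .of_scong_of_tau hA (hXY.par_left S) (.of_scong hB.symm hs), .inl (.refl B')⟩

end Lag

lemma BisimRel.symm {A B : Proc} (h : BisimRel H M A B) : BisimRel H M B A := by
  rcases h with h | h | h
  exacts [.inl h.symm, .inr (.inr h), .inr (.inl h)]

lemma isBarbedBisim (hM : ObsDeterministic H M) : IsBarbedBisim H (BisimRel H M) := by
  refine ⟨fun _ _ => BisimRel.symm, fun A B h => ⟨?_, fun S hS => ?_, fun A' hs => ?_⟩⟩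
  · rcases h with h | h | h
    exacts [fun α hb => .of_strongBarb (hb.of_scong h.symm), fun _ => h.weakBarb_left,
      fun _ => h.weakBarb_right]
  · have hS' : ∀ a ∈ S.fnames, a ∉ H := fun a ha haH =>
      (Set.eq_empty_iff_forall_notMem.1 hS) a ⟨ha, haH⟩
    rcases h with h | h | h
    exacts [.inl (.parCong h (.refl S)), .inr (.inl (h.par hS')), .inr (.inr (h.par hS'))]
  · rcases h with h | h | h
    · exact BisimRel.tau_of_scong h hs
    · exact h.tau_left hM hs
    · exact h.tau_right hs

lemma barbedEquiv_of_wtau (hM : ObsDeterministic H M) {X Y : Proc} (hX : M X)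
    (hXY : WTau X Y) (hobs : WeakBarb H X = WeakBarb H Y) : BarbedEquiv H X Y :=
  ⟨BisimRel H M, hM.isBarbedBisim, .inr (.inl ⟨X, Y, .nil, by simp [fnames],
    (SCong.parNil X).symm, (SCong.parNil Y).symm, hX, hXY, hobs⟩)⟩

end ObsDeterministic

/-! ### The translation and de Bruijn indices -/

namespace Proc

lemma lift_zero (P : Proc) (k : ℕ) : P.lift 0 k = P := by
  induction P generalizing k <;> simp_all [lift]

lemma lift_lift_comm (P : Proc) {m k : ℕ} (d e : ℕ) (h : m ≤ k) :
    (P.lift e m).lift d (k + e) = (P.lift d k).lift e m := by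
  induction P generalizing m k with
  | pvar n =>
      by_cases h₁ : n < m <;> by_cases h₂ : n < k <;> simp [lift, h₁, h₂] <;>
        (try split_ifs) <;> (try simp only [pvar.injEq]) <;> omega
  | inp a P ih => simp [lift, ← ih (Nat.succ_le_succ h), Nat.add_right_comm]
  | _ => simp_all [lift]

lemma lift_lift_add (P : Proc) {j m : ℕ} (d e : ℕ) (h₁ : j ≤ m) (h₂ : m ≤ j + e) :
    (P.lift e j).lift d m = P.lift (e + d) j := by
  induction P generalizing j m with
  | pvar n =>
      by_cases h : n < j <;> simp [lift, h] <;> (try split_ifs) <;>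
        (try simp only [pvar.injEq]) <;> omega
  | inp a P ih => simp [lift, ih (Nat.succ_le_succ h₁) (by omega)]
  | _ => simp_all [lift]

lemma subst_lift_succ (P : Proc) {m k : ℕ} (e : ℕ) (C : Proc) (h₁ : m ≤ k)
    (h₂ : k ≤ m + e) : (P.lift (e + 1) m).subst k C = P.lift e m := by
  induction P generalizing m k with
  | pvar n =>
      by_cases h : n < m <;> simp [lift, subst, h] <;> split_ifs <;> first | rfl | omega
  | inp a P ih => simp [lift, subst, ih (Nat.succ_le_succ h₁) (by omega)]
  | _ => simp_all [lift, subst]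

lemma subst_lift_one (P C : Proc) (k : ℕ) : (P.lift 1 k).subst k C = P := by
  simpa [lift_zero] using subst_lift_succ P 0 C le_rfl le_rfl

lemma subst_lift_comm (P : Proc) {m k : ℕ} (e : ℕ) (C : Proc) (h : m ≤ k) :
    (P.lift e m).subst (k + e) C = (P.subst k C).lift e m := by
  induction P generalizing m k with
  | pvar n =>
      by_cases hn : n = k
      · subst hn
        simp [lift, subst, show ¬ n < m by omega, lift_lift_add C e n (Nat.zero_le m) (by omega)]
      by_cases h₁ : n < m <;> by_cases h₂ : k < n <;> simp [lift, subst, hn, h₁, h₂] <;>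
        split_ifs <;> first | rfl | omega | (simp only [pvar.injEq]; omega)
  | inp a P ih => simp [lift, subst, ← ih (Nat.succ_le_succ h), Nat.add_right_comm]
  | _ => simp_all [lift, subst]

end Proc

lemma lift_trFV (f d k : ℕ) : (trFV f).lift d k = trFV f := by
  induction f generalizing k <;> simp_all [trFV, Proc.lift]

lemma subst_trFV (f k : ℕ) (S : Proc) : (trFV f).subst k S = trFV f := by
  induction f generalizing k <;> simp_all [trFV, Proc.subst]

lemma trTN_liftT (t : Term) (d k : ℕ) : trTN (t.liftT d k) = (trTN t).lift d k := by
  induction t generalizing k with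
  | fvar f => simp [Term.liftT, trTN, lift_trFV]
  | bvar n => by_cases h : n < k <;> simp [Term.liftT, h, trTN, Proc.lift]
  | lam t ih =>
      simp [Term.liftT, trTN, Proc.lift, Restart, trMt, ih,
        ← (trTN t).lift_lift_comm d 1 (Nat.zero_le (k + 1)),
        ← ((trTN t).lift 1 0).lift_lift_comm d 1 (Nat.le_add_left 2 k)]
  | app t s iht ihs =>
      simp [Term.liftT, trTN, Proc.lift, iht, ihs, ← Proc.lift_lift_comm _ d 1 (Nat.zero_le k)]

lemma trTN_substT (t s : Term) (k : ℕ) : trTN (t.substT k s) = (trTN t).subst k (trTN s) := by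
  induction t generalizing k with
  | fvar f => simp [Term.substT, trTN, subst_trFV]
  | bvar n =>
      rcases lt_trichotomy n k with h | rfl | h
      · simp [Term.substT, trTN, Proc.subst, h.ne, h.not_gt]
      · simp [Term.substT, trTN, Proc.subst, trTN_liftT]
      · simp [Term.substT, trTN, Proc.subst, h.ne', h]
  | lam t ih =>
      simp [Term.substT, trTN, Proc.subst, Restart, trMt, ih,
        ← (trTN t).subst_lift_comm 1 (trTN s) (Nat.zero_le (k + 1)),
        ← ((trTN t).lift 1 0).subst_lift_comm 1 (trTN s) (Nat.le_add_left 2 k)]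
  | app t u iht ihu =>
      simp [Term.substT, trTN, Proc.subst, iht, ihu,
        ← Proc.subst_lift_comm _ 1 (trTN s) (Nat.zero_le k)]

/-! ### The states of translated machine runs -/

def machineTail (n : ℕ) : Proc := .par (.out kN (trFV n)) (.par RecP (.out recN RecP))

def appBody (t s : Term) : Proc :=
  .par ((trTN t).lift 1 0) (.out cN (.par (.out hdN ((trTN s).lift 1 0)) (.out cN (.pvar 0))))

def lamBody (t : Term) : Proc :=
  .par (.pvar 0) (.par (.out bN Restart) (.inp hdN (.inp bN (((trTN t).lift 1 0).lift 1 2))))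

def lamGetArg (t : Term) (π : Stack) : Proc :=
  .inp hdN (.inp bN ((((trTN t).lift 1 0).lift 1 2).subst 2 (trStkN π)))

def lamResume (t s : Term) (π : Stack) : Proc :=
  .inp bN (((((trTN t).lift 1 0).lift 1 2).subst 2 (trStkN (.cons s π))).subst 1 (trTN s))

def contGetHead : Proc := .inp hdN (.inp bN (Choice (.pvar 1)))

def contResume (t : Term) : Proc := .inp bN ((Choice (.pvar 1)).subst 1 (trTN t))

def doneGuard : Proc := .inp doneN .nil

def enterBranch (t : Term) : Proc :=
  .inp enterN (.inp cN (.par ((trTN t).lift 2 0) (.out cN trMt)))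

def skipBranch : Proc := .inp skipN (.out initN .nil)

/- The intermediate states of the translation, between two translated configurations: `lamArg`
after `[[λx.t]]` has received the stack on `c`, `lamBind` after it has received the argument on
`hd`, and `lamFlag` when the stack was empty and `Restart` waits on `lam`; `contArg`, `contBind`
and `doneFlag` likewise for `Cont`; `choiceEnter` and `choiceSkip` after `ch` has selected a
branch of `Choice`, and `enterFlag` and `skipFlag` when that branch waits on its flag. -/
namespace Shape

def lamArg (t : Term) (π : Stack) (n : ℕ) : Proc :=
  .par (trStkN π) (.par (.out bN Restart) (.par (lamGetArg t π) (machineTail n)))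

def lamBind (t s : Term) (π : Stack) (n : ℕ) : Proc :=
  .par (.out cN (trStkN π)) (.par (.out bN Restart) (.par (lamResume t s π) (machineTail n)))

def lamFlag (t : Term) (n : ℕ) : Proc := .par Restart (.par (lamGetArg t .nil) (machineTail n))

def contArg (π : Stack) (n : ℕ) : Proc :=
  .par (trStkN π) (.par (.out bN doneGuard) (.par contGetHead (machineTail n)))

def contBind (t : Term) (π : Stack) (n : ℕ) : Proc :=
  .par (.out cN (trStkN π)) (.par (.out bN doneGuard) (.par (contResume t) (machineTail n)))

def doneFlag (n : ℕ) : Proc := .par doneGuard (.par contGetHead (machineTail n))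

def choiceEnter (t : Term) (π : Stack) (n : ℕ) : Proc :=
  .par (.inp chN ((enterBranch t).lift 1 0)) (.par (.out chN skipBranch)
    (.par (.out cN (trStkN π)) (machineTail n)))

def choiceSkip (t : Term) (π : Stack) (n : ℕ) : Proc :=
  .par (.inp chN (skipBranch.lift 1 0)) (.par (.out chN (enterBranch t))
    (.par (.out cN (trStkN π)) (machineTail n)))

def enterFlag (t : Term) (π : Stack) (n : ℕ) : Proc :=
  .par (enterBranch t) (.par (.out cN (trStkN π)) (machineTail n))

def skipFlag (π : Stack) (n : ℕ) : Proc :=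
  .par skipBranch (.par (.out cN (trStkN π)) (machineTail n))

end Shape

@[simp] lemma threads_trTN (t : Term) : (trTN t).threads = {trTN t} := by
  cases t with
  | fvar f => cases f <;> rfl
  | _ => rfl

section ShapeAnalysis

-- Channel names unfold to numerals, so that `simp` decides which prefixes of a shape match.
attribute [local simp] hdN cN bN kN sucN zN initN recN chN lamN enterN skipN doneN

@[simp] lemma out_ne_trTN (t : Term) (a : Name) (R : Proc) : .out a R ≠ trTN t := by
  cases t with
  | fvar f => cases f <;> simp [trTN, trFV]
  | _ => simp [trTN]

@[simp] lemma threads_RecP : RecP.threads = {RecP} := rfl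
@[simp] lemma threads_Restart : Restart.threads = {Restart} := rfl
@[simp] lemma threads_lamGetArg (t : Term) (π : Stack) :
    (lamGetArg t π).threads = {lamGetArg t π} := rfl
@[simp] lemma threads_lamResume (t s : Term) (π : Stack) :
    (lamResume t s π).threads = {lamResume t s π} := rfl
@[simp] lemma threads_contGetHead : contGetHead.threads = {contGetHead} := rfl
@[simp] lemma threads_contResume (t : Term) : (contResume t).threads = {contResume t} := rfl
@[simp] lemma threads_doneGuard : doneGuard.threads = {doneGuard} := rfl
@[simp] lemma threads_enterBranch (t : Term) : (enterBranch t).threads = {enterBranch t} := rfl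
@[simp] lemma threads_skipBranch : skipBranch.threads = {skipBranch} := rfl

@[simp] lemma threads_machineTail (n : ℕ) :
    (machineTail n).threads = {.out kN (trFV n), RecP, .out recN RecP} := by
  simp [machineTail, Multiset.cons_swap]

lemma choice_trTN (t : Term) : Choice (trTN t) = choicePlus (enterBranch t) skipBranch := rfl

@[simp] lemma threads_trStkN_nil : (trStkN .nil).threads = {trMt} := rfl

@[simp] lemma threads_trStkN_cons (t : Term) (π : Stack) :
    (trStkN (.cons t π)).threads = {.out hdN (trTN t), .out cN (trStkN π)} := rfl

namespace Shape

variable {t s : Term} {π : Stack} {n : ℕ} {W : Proc}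

lemma tau_app (h : Step (trNConf (.ev (.app t s) π n)) .tau W) :
    SCong W (trNConf (.ev t (.cons s π) n)) := by
  refine h.scong_of_unique_redex (a := cN) (R := trStkN π) (B := appBody t s)
    (m := (machineTail n).threads) (by simp [trNConf, trTN, appBody, Multiset.cons_swap]) ?_ ?_
  · intro a R B hR hB
    simp [trNConf, trTN, RecP, appBody] at hR hB ⊢
    grind
  · simp [trNConf, appBody, Proc.subst, Proc.subst_lift_one, Proc.lift_zero, trStkN,
      Multiset.cons_swap]

lemma tau_lam (h : Step (trNConf (.ev (.lam t) π n)) .tau W) : SCong W (lamArg t π n) := by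
  refine h.scong_of_unique_redex (a := cN) (R := trStkN π) (B := lamBody t)
    (m := (machineTail n).threads) (by simp [trNConf, trTN, lamBody, Multiset.cons_swap]) ?_ ?_
  · intro a R B hR hB
    simp [trNConf, trTN, RecP, lamBody] at hR hB ⊢
    grind
  · simp [lamArg, lamBody, lamGetArg, Restart, trMt, Proc.subst, Proc.lift_zero]
    simp only [← Multiset.singleton_add]
    abel

lemma not_tau_fvar {f : ℕ} : ¬ Step (trNConf (.ev (.fvar f) π n)) .tau W := by
  refine Step.not_tau_of_no_redex fun a R B hR hB => ?_
  cases f <;> simp [trNConf, trTN, trFV, RecP] at hR hB <;> grind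

lemma not_tau_bvar {j : ℕ} : ¬ Step (trNConf (.ev (.bvar j) π n)) .tau W := by
  refine Step.not_tau_of_no_redex fun a R B hR hB => ?_
  simp [trNConf, trTN, RecP] at hR hB
  grind

lemma tau_cont (h : Step (trNConf (.cont π n)) .tau W) : SCong W (contArg π n) := by
  refine h.scong_of_unique_redex (a := cN) (R := trStkN π)
    (B := .par (.pvar 0) (.par (.out bN doneGuard) contGetHead))
    (m := (machineTail n).threads) (by simp [trNConf, ContP, doneGuard, contGetHead,
      Multiset.cons_swap]) ?_ ?_
  · intro a R B hR hB
    simp [trNConf, ContP, RecP, doneGuard, contGetHead] at hR hB ⊢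
    grind
  · simp [contArg, doneGuard, contGetHead, Choice, choicePlus, trMt, Proc.subst, Proc.lift,
      Proc.lift_zero]
    simp only [← Multiset.singleton_add]
    abel

lemma tau_lamArg_nil (h : Step (lamArg t .nil n) .tau W) : SCong W (lamFlag t n) := by
  refine h.scong_of_unique_redex (a := bN) (R := Restart) (B := .pvar 0)
    (m := lamGetArg t .nil ::ₘ (machineTail n).threads)
    (by simp [lamArg, lamGetArg, trMt, Multiset.cons_swap]) ?_ ?_
  · intro a R B hR hB
    simp [lamArg, lamGetArg, trMt, RecP] at hR hB ⊢
    grind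
  · simp [lamFlag, Proc.subst, Proc.lift_zero, Restart, lamGetArg, Multiset.cons_swap]

lemma tau_lamArg_cons (h : Step (lamArg t (.cons s π) n) .tau W) : SCong W (lamBind t s π n) := by
  refine h.scong_of_unique_redex (a := hdN) (R := trTN s)
    (B := .inp bN ((((trTN t).lift 1 0).lift 1 2).subst 2 (trStkN (.cons s π))))
    (m := .out cN (trStkN π) ::ₘ .out bN Restart ::ₘ (machineTail n).threads)
    (by simp [lamArg, lamGetArg, Multiset.cons_swap]) ?_ ?_
  · intro a R B hR hB
    simp [lamArg, lamGetArg, RecP] at hR hB ⊢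
    grind
  · simp [lamBind, lamResume, Proc.subst, Multiset.cons_swap]

lemma tau_lamBind (h : Step (lamBind t s π n) .tau W) :
    SCong W (trNConf (.ev (t.substT 0 s) π n)) := by
  refine h.scong_of_unique_redex (a := bN) (R := Restart)
    (B := ((((trTN t).lift 1 0).lift 1 2).subst 2 (trStkN (.cons s π))).subst 1 (trTN s))
    (m := .out cN (trStkN π) ::ₘ (machineTail n).threads)
    (by simp [lamBind, lamResume, Multiset.cons_swap]) ?_ ?_
  · intro a R B hR hB
    simp [lamBind, lamResume, Restart, RecP] at hR hB ⊢
    grind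
  · have h₁ : ((trTN t).lift 1 0).subst 1 (trTN s) = ((trTN t).subst 0 (trTN s)).lift 1 0 :=
      (trTN t).subst_lift_comm 1 (trTN s) le_rfl
    simp [trNConf, trTN_substT, Proc.subst_lift_one, h₁, Multiset.cons_swap]

lemma not_tau_lamFlag : ¬ Step (lamFlag t n) .tau W := by
  refine Step.not_tau_of_no_redex fun a R B hR hB => ?_
  simp [lamFlag, lamGetArg, Restart, RecP] at hR hB
  grind

lemma tau_contArg_nil (h : Step (contArg .nil n) .tau W) : SCong W (doneFlag n) := by
  refine h.scong_of_unique_redex (a := bN) (R := doneGuard) (B := .pvar 0)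
    (m := contGetHead ::ₘ (machineTail n).threads)
    (by simp [contArg, trMt, Multiset.cons_swap]) ?_ ?_
  · intro a R B hR hB
    simp [contArg, contGetHead, trMt, RecP] at hR hB ⊢
    grind
  · simp [doneFlag, doneGuard, Proc.subst, Proc.lift_zero, Multiset.cons_swap]

lemma tau_contArg_cons (h : Step (contArg (.cons t π) n) .tau W) : SCong W (contBind t π n) := by
  refine h.scong_of_unique_redex (a := hdN) (R := trTN t) (B := .inp bN (Choice (.pvar 1)))
    (m := .out cN (trStkN π) ::ₘ .out bN doneGuard ::ₘ (machineTail n).threads)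
    (by simp [contArg, contGetHead, Multiset.cons_swap]) ?_ ?_
  · intro a R B hR hB
    simp [contArg, contGetHead, RecP] at hR hB ⊢
    grind
  · simp [contBind, contResume, Proc.subst, Multiset.cons_swap]

lemma tau_contBind (h : Step (contBind t π n) .tau W) : SCong W (ChoiceConfig t π n) := by
  refine h.scong_of_unique_redex (a := bN) (R := doneGuard)
    (B := (Choice (.pvar 1)).subst 1 (trTN t))
    (m := .out cN (trStkN π) ::ₘ (machineTail n).threads)
    (by simp [contBind, contResume, Multiset.cons_swap]) ?_ ?_
  · intro a R B hR hB
    simp [contBind, contResume, doneGuard, RecP] at hR hB ⊢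
    grind
  · have h₁ : ((trTN t).lift 3 0).subst 2 doneGuard = (trTN t).lift 2 0 :=
      (trTN t).subst_lift_succ 2 doneGuard (Nat.zero_le 2) le_rfl
    simp [ChoiceConfig, Choice, choicePlus, trMt, Proc.subst, Proc.lift, h₁,
      Multiset.cons_swap]

lemma not_tau_doneFlag : ¬ Step (doneFlag n) .tau W := by
  refine Step.not_tau_of_no_redex fun a R B hR hB => ?_
  simp [doneFlag, doneGuard, contGetHead, RecP] at hR hB
  grind

lemma tau_choice (h : Step (ChoiceConfig t π n) .tau W) :
    SCong W (choiceEnter t π n) ∨ SCong W (choiceSkip t π n) := by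
  obtain ⟨a, R, B, hR, hB, hW⟩ := h.exists_redex
  simp [ChoiceConfig, choice_trTN, choicePlus, enterBranch, skipBranch, RecP] at hR hB
  obtain ⟨rfl, rfl⟩ : a = chN ∧ B = .inp chN (.pvar 1) := by simp only [chN]; grind
  obtain rfl | rfl : R = skipBranch ∨ R = enterBranch t := by
    simp [enterBranch, skipBranch] at hR ⊢; grind
  · exact .inr (hW
      (.out chN (enterBranch t) ::ₘ .out cN (trStkN π) ::ₘ (machineTail n).threads) _
      (by simp [ChoiceConfig, choice_trTN, choicePlus, Multiset.cons_swap])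
      (by simp [choiceSkip, Proc.subst, Multiset.cons_swap]))
  · exact .inl (hW
      (.out chN skipBranch ::ₘ .out cN (trStkN π) ::ₘ (machineTail n).threads) _
      (by simp [ChoiceConfig, choice_trTN, choicePlus, Multiset.cons_swap])
      (by simp [choiceEnter, Proc.subst, Multiset.cons_swap]))

lemma tau_choiceEnter (h : Step (choiceEnter t π n) .tau W) : SCong W (enterFlag t π n) := by
  refine h.scong_of_unique_redex (a := chN) (R := skipBranch) (B := (enterBranch t).lift 1 0)
    (m := .out cN (trStkN π) ::ₘ (machineTail n).threads)
    (by simp [choiceEnter, Multiset.cons_swap]) ?_ ?_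
  · intro a R B hR hB
    simp [choiceEnter, RecP] at hR hB ⊢
    grind
  · simp [enterFlag, Proc.subst_lift_one, Multiset.cons_swap, enterBranch]

lemma tau_choiceSkip (h : Step (choiceSkip t π n) .tau W) : SCong W (skipFlag π n) := by
  refine h.scong_of_unique_redex (a := chN) (R := enterBranch t) (B := skipBranch.lift 1 0)
    (m := .out cN (trStkN π) ::ₘ (machineTail n).threads)
    (by simp [choiceSkip, Multiset.cons_swap]) ?_ ?_
  · intro a R B hR hB
    simp [choiceSkip, RecP] at hR hB ⊢
    grind
  · simp [skipFlag, Proc.subst_lift_one, Multiset.cons_swap, skipBranch]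

lemma not_tau_enterFlag : ¬ Step (enterFlag t π n) .tau W := by
  refine Step.not_tau_of_no_redex fun a R B hR hB => ?_
  simp [enterFlag, enterBranch, RecP] at hR hB
  grind

lemma not_tau_skipFlag : ¬ Step (skipFlag π n) .tau W := by
  refine Step.not_tau_of_no_redex fun a R B hR hB => ?_
  simp [skipFlag, skipBranch, RecP] at hR hB
  grind

end Shape

inductive IsShape : Proc → Prop
  | ev (t : Term) (π : Stack) (n : ℕ) : IsShape (trNConf (.ev t π n))
  | cont (π : Stack) (n : ℕ) : IsShape (trNConf (.cont π n))
  | lamArg (t : Term) (π : Stack) (n : ℕ) : IsShape (Shape.lamArg t π n)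
  | lamBind (t s : Term) (π : Stack) (n : ℕ) : IsShape (Shape.lamBind t s π n)
  | lamFlag (t : Term) (n : ℕ) : IsShape (Shape.lamFlag t n)
  | contArg (π : Stack) (n : ℕ) : IsShape (Shape.contArg π n)
  | contBind (t : Term) (π : Stack) (n : ℕ) : IsShape (Shape.contBind t π n)
  | doneFlag (n : ℕ) : IsShape (Shape.doneFlag n)
  | choice (t : Term) (π : Stack) (n : ℕ) : IsShape (ChoiceConfig t π n)
  | choiceEnter (t : Term) (π : Stack) (n : ℕ) : IsShape (Shape.choiceEnter t π n)
  | choiceSkip (t : Term) (π : Stack) (n : ℕ) : IsShape (Shape.choiceSkip t π n)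
  | enterFlag (t : Term) (π : Stack) (n : ℕ) : IsShape (Shape.enterFlag t π n)
  | skipFlag (π : Stack) (n : ℕ) : IsShape (Shape.skipFlag π n)

namespace IsShape

open Shape

lemma tau_cases {Z : Proc} (hZ : IsShape Z) :
    (∀ W, ¬ Step Z .tau W) ∨ (∃ Z', IsShape Z' ∧ ∀ W, Step Z .tau W → SCong W Z') ∨
      ∃ t π n, Z = ChoiceConfig t π n := by
  cases hZ with
  | ev t π n =>
      cases t with
      | fvar f => exact .inl fun _ => not_tau_fvar
      | bvar j => exact .inl fun _ => not_tau_bvar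
      | app t s => exact .inr (.inl ⟨_, ev t (.cons s π) n, fun _ => tau_app⟩)
      | lam t => exact .inr (.inl ⟨_, lamArg t π n, fun _ => tau_lam⟩)
  | cont π n => exact .inr (.inl ⟨_, contArg π n, fun _ => tau_cont⟩)
  | lamArg t π n =>
      cases π with
      | nil => exact .inr (.inl ⟨_, lamFlag t n, fun _ => tau_lamArg_nil⟩)
      | cons s π => exact .inr (.inl ⟨_, lamBind t s π n, fun _ => tau_lamArg_cons⟩)
  | lamBind t s π n => exact .inr (.inl ⟨_, ev (t.substT 0 s) π n, fun _ => tau_lamBind⟩)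
  | lamFlag t n => exact .inl fun _ => not_tau_lamFlag
  | contArg π n =>
      cases π with
      | nil => exact .inr (.inl ⟨_, doneFlag n, fun _ => tau_contArg_nil⟩)
      | cons t π => exact .inr (.inl ⟨_, contBind t π n, fun _ => tau_contArg_cons⟩)
  | contBind t π n => exact .inr (.inl ⟨_, choice t π n, fun _ => tau_contBind⟩)
  | doneFlag n => exact .inl fun _ => not_tau_doneFlag
  | choice t π n => exact .inr (.inr ⟨t, π, n, rfl⟩)
  | choiceEnter t π n => exact .inr (.inl ⟨_, enterFlag t π n, fun _ => tau_choiceEnter⟩)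
  | choiceSkip t π n => exact .inr (.inl ⟨_, skipFlag π n, fun _ => tau_choiceSkip⟩)
  | enterFlag t π n => exact .inl fun _ => not_tau_enterFlag
  | skipFlag π n => exact .inl fun _ => not_tau_skipFlag

lemma mem_HSet_of_out {Z : Proc} (hZ : IsShape Z) {a : Name} {R : Proc}
    (h : .out a R ∈ Z.threads) : a ∈ HSet := by
  cases hZ with
  | lamArg t π n | contArg π n =>
      cases π <;> simp [Shape.lamArg, Shape.contArg, HSet, trMt, RecP, Restart, lamGetArg,
        doneGuard, contGetHead] at h ⊢ <;> grind
  | _ =>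
      simp [trNConf, Shape.lamBind, Shape.lamFlag, Shape.contBind, Shape.doneFlag, ChoiceConfig,
        Shape.choiceEnter, Shape.choiceSkip, Shape.enterFlag, Shape.skipFlag, choice_trTN,
        choicePlus, HSet, RecP, ContP, Restart, lamGetArg, lamResume, doneGuard, contGetHead,
        contResume, enterBranch, skipBranch] at h ⊢
      grind

lemma not_tau_of_inp {Z W : Proc} (hZ : IsShape Z) {a : Name} {B : Proc}
    (h : .inp a B ∈ Z.threads) (ha : a ∉ HSet) : ¬ Step Z .tau W := by
  simp [HSet] at ha
  cases hZ with
  | ev t π n =>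
      cases t with
      | fvar f => exact not_tau_fvar
      | bvar j => exact not_tau_bvar
      | _ => simp [trNConf, trTN, RecP] at h; grind
  | lamArg t π n | contArg π n =>
      cases π <;> simp [Shape.lamArg, Shape.contArg, trMt, RecP, Restart, lamGetArg, doneGuard,
        contGetHead] at h <;> grind
  | lamFlag => exact not_tau_lamFlag
  | doneFlag => exact not_tau_doneFlag
  | enterFlag => exact not_tau_enterFlag
  | skipFlag => exact not_tau_skipFlag
  | _ =>
      simp [trNConf, Shape.lamBind, Shape.contBind, ChoiceConfig, Shape.choiceEnter,
        Shape.choiceSkip, choice_trTN, choicePlus, RecP, ContP, lamResume, contResume] at h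
      grind

end IsShape

namespace Shape

variable {t : Term} {π : Stack} {n : ℕ}

lemma weakBarb_choiceEnter_enter : WeakBarb HSet (choiceEnter t π n) (.inb enterN) := by
  obtain ⟨Q, hQ, hQT⟩ := Step.exists_tau_scong (P := choiceEnter t π n) (T := enterFlag t π n)
    (a := chN) (R := skipBranch) (B := (enterBranch t).lift 1 0)
    (m := .out cN (trStkN π) ::ₘ (machineTail n).threads)
    (by simp [choiceEnter, Multiset.cons_swap])
    (by simp [enterFlag, Proc.subst_lift_one, Multiset.cons_swap])
  have hb : StrongBarb HSet (enterFlag t π n) (.inb enterN) :=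
    .inb_of_mem_threads (B := .inp cN (.par ((trTN t).lift 2 0) (.out cN trMt)))
      (by simp [enterFlag, enterBranch]) (by simp [HSet])
  exact .of_wtau (.single hQ) (.of_strongBarb (hb.of_scong hQT))

lemma weakBarb_choiceSkip_skip : WeakBarb HSet (choiceSkip t π n) (.inb skipN) := by
  obtain ⟨Q, hQ, hQT⟩ := Step.exists_tau_scong (P := choiceSkip t π n) (T := skipFlag π n)
    (a := chN) (R := enterBranch t) (B := skipBranch.lift 1 0)
    (m := .out cN (trStkN π) ::ₘ (machineTail n).threads)
    (by simp [choiceSkip, Multiset.cons_swap])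
    (by simp [skipFlag, Proc.subst_lift_one, Multiset.cons_swap])
  have hb : StrongBarb HSet (skipFlag π n) (.inb skipN) :=
    .inb_of_mem_threads (B := .out initN .nil) (by simp [skipFlag, skipBranch]) (by simp [HSet])
  exact .of_wtau (.single hQ) (.of_strongBarb (hb.of_scong hQT))

lemma not_weakBarb_choiceEnter_skip : ¬ WeakBarb HSet (choiceEnter t π n) (.inb skipN) := by
  rintro ⟨P, hw, -, V, Q, hs⟩
  rcases hw.scong_cases_of_tau_det (fun _ => tau_choiceEnter) (fun _ => not_tau_enterFlag)
    with hP | hP <;>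
  · obtain ⟨B, hB⟩ := (Step.of_scong hP.symm hs).mem_threads_of_inp
    simp [choiceEnter, enterFlag, enterBranch, RecP] at hB

lemma not_weakBarb_choiceSkip_enter : ¬ WeakBarb HSet (choiceSkip t π n) (.inb enterN) := by
  rintro ⟨P, hw, -, V, Q, hs⟩
  rcases hw.scong_cases_of_tau_det (fun _ => tau_choiceSkip) (fun _ => not_tau_skipFlag)
    with hP | hP <;>
  · obtain ⟨B, hB⟩ := (Step.of_scong hP.symm hs).mem_threads_of_inp
    simp [choiceSkip, skipFlag, skipBranch, RecP] at hB

/-- At the internal choice the two branches are told apart by the weak barbs: only the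
`enter` branch can still do `enter`, and only the `skip` branch can still do `skip`. -/
lemma scong_of_tau_choice {W₁ W₂ : Proc} (h₁ : Step (ChoiceConfig t π n) .tau W₁)
    (h₂ : Step (ChoiceConfig t π n) .tau W₂)
    (hobs : WeakBarb HSet W₁ = WeakBarb HSet (ChoiceConfig t π n)) : SCong W₁ W₂ := by
  rcases tau_choice h₁ with hW₁ | hW₁ <;> rcases tau_choice h₂ with hW₂ | hW₂
  · exact hW₁.trans hW₂.symm
  · have hskip := WeakBarb.of_wtau (.single h₂) (weakBarb_choiceSkip_skip.of_scong hW₂)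
    exact absurd ((congrFun hobs _ ▸ hskip).of_scong hW₁.symm) not_weakBarb_choiceEnter_skip
  · have henter := WeakBarb.of_wtau (.single h₂) (weakBarb_choiceEnter_enter.of_scong hW₂)
    exact absurd ((congrFun hobs _ ▸ henter).of_scong hW₁.symm) not_weakBarb_choiceSkip_enter
  · exact hW₁.trans hW₂.symm

end Shape

end ShapeAnalysis

def IsMachineState (X : Proc) : Prop := ∃ Z, IsShape Z ∧ SCong X Z

lemma obsDeterministic_isMachineState : ObsDeterministic HSet IsMachineState where
  tau_closed := by
    rintro X X' ⟨Z, hZ, hXZ⟩ hs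
    replace hs := Step.of_scong hXZ.symm hs
    rcases hZ.tau_cases with hst | ⟨Z', hZ', hdet⟩ | ⟨t, π, n, rfl⟩
    · exact absurd hs (hst _)
    · exact ⟨Z', hZ', hdet _ hs⟩
    · rcases Shape.tau_choice hs with h | h
      exacts [⟨_, .choiceEnter t π n, h⟩, ⟨_, .choiceSkip t π n, h⟩]
  scong_of_tau_of_tau := by
    rintro X X₁ X₂ ⟨Z, hZ, hXZ⟩ h₁ h₂ hobs
    replace h₁ := Step.of_scong hXZ.symm h₁
    replace h₂ := Step.of_scong hXZ.symm h₂
    rcases hZ.tau_cases with hst | ⟨Z', -, hdet⟩ | ⟨t, π, n, rfl⟩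
    · exact absurd h₁ (hst _)
    · exact (hdet _ h₁).trans (hdet _ h₂).symm
    · exact Shape.scong_of_tau_choice h₁ h₂ (hobs.trans (weakBarb_eq_of_scong hXZ))
  not_tau_of_inp := by
    rintro X X' W a V ⟨Z, hZ, hXZ⟩ hs ha hW
    obtain ⟨B, hB⟩ := (Step.of_scong hXZ.symm hs).mem_threads_of_inp
    exact hZ.not_tau_of_inp hB ha (.of_scong hXZ.symm hW)
  mem_of_out := by
    rintro X X' a V ⟨Z, hZ, hXZ⟩ hs
    obtain ⟨R, hR⟩ := (Step.of_scong hXZ.symm hs).mem_threads_of_out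
    exact hZ.mem_HSet_of_out hR

lemma MachineProc.isMachineState {P : Proc} (hP : MachineProc P) : IsMachineState P := by
  obtain ⟨C, hC⟩ := hP
  induction hC with
  | refl =>
      cases C with
      | ev t π n => exact ⟨_, .ev t π n, .refl _⟩
      | cont π n => exact ⟨_, .cont π n, .refl _⟩
  | tail _ hs ih => exact obsDeterministic_isMachineState.tau_closed ih hs

theorem wtau_same_observables_barbed_equiv_general (P P' : Proc)
    (hP : MachineProc P)
    (h : WTau P P') (hobs : WkObs P = WkObs P') :
    BarbedEquiv HSet P P' :=
  obsDeterministic_isMachineState.barbedEquiv_of_wtau hP.isMachineState h hobs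

/-- If `P` and `P'` are machine processes, `P ==tau==> P'`, and `P` and `P'` have
the same weak observable actions, then `P` and `P'` are barbed equivalent
w.r.t. `H`. -/
theorem wtau_same_observables_barbed_equiv (P P' : Proc)
    (hP : MachineProc P) (hP' : MachineProc P')
    (h : WTau P P') (hobs : WkObs P = WkObs P') :
    BarbedEquiv HSet P P' :=
  wtau_same_observables_barbed_equiv_general P P' hP h hobs
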